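/- arXiv:2309.06998 — 4 statements merged into one kernel-verified Lean document; each statement's English description precedes it below -/
import Mathlib

section
/- (Strong duality / affine Farkas lemma) Let a ∈ ℝⁿ, b ∈ ℝ, M ∈ ℝ^{m×n} and q ∈ ℝ^m, and suppose the polyhedron 𝒳 = {x ∈ ℝⁿ : M x ≤ q} is nonempty. Then the inequality a·x ≤ b holds for every x ∈ 𝒳 if and only if there exists λ ∈ ℝ^m with λ ≥ 0 (entrywise), Mᵀ λ = a and λ·q ≤ b. -/
/-!
Weak duality gives one direction. For the other, homogenize: on a nonempty polyhedron,
`a ⬝ᵥ x ≤ b` is valid iff `a ⬝ᵥ y ≤ s * b` whenever `0 ≤ s` and `M *ᵥ y ≤ s • q` (for `s > 0`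
rescale to `x = s⁻¹ • y`; for `s = 0`, `y` is a recession direction of the polyhedron, along which
`a ⬝ᵥ x` would be unbounded if `a ⬝ᵥ y > 0`). By the Farkas lemma for the cone generated by the
vectors `(Mᵢ, qᵢ)` and `(0, 1)`, this says exactly that `(a, b)` lies in that cone, and the
coefficients of `(Mᵢ, qᵢ)` form `lam`. The Farkas lemma itself is Hahn–Banach separation from a
closed cone: by the conic Carathéodory theorem, a finitely generated cone is a finite union of
images of orthants under injective linear maps, hence closed.
-/

open Function Matrix

section FinitelyGeneratedCone

variable {ι E : Type*} [Fintype ι] [AddCommGroup E] [Module ℝ E]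

lemma exists_nonneg_sub_smul_eq_zero {c g : ι → ℝ} (hc : 0 ≤ c) (hg : ∃ j, 0 < g j) :
    ∃ t : ℝ, 0 ≤ c - t • g ∧ ∃ i, 0 < g i ∧ (c - t • g) i = 0 := by
  classical
  obtain ⟨i, hi, hmin⟩ := Finset.exists_min_image {j | 0 < g j} (fun j => c j / g j)
    (by simpa [Finset.Nonempty] using hg)
  rw [Finset.mem_filter_univ] at hi
  refine ⟨c i / g i, fun j => ?_, i, hi, by simp [div_mul_cancel₀ _ hi.ne']⟩
  have ht : 0 ≤ c i / g i := div_nonneg (hc i) hi.le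
  simp only [Pi.zero_apply, Pi.sub_apply, Pi.smul_apply, smul_eq_mul, sub_nonneg]
  rcases lt_or_ge 0 (g j) with hj | hj
  · exact (le_div_iff₀ hj).mp (hmin j (by rwa [Finset.mem_filter_univ]))
  · exact (mul_nonpos_of_nonneg_of_nonpos ht hj).trans (hc j)

lemma exists_support_ssubset_of_not_linearIndepOn {v : ι → E} {c : ι → ℝ} (hc : 0 ≤ c)
    (hv : ¬ LinearIndepOn ℝ v (support c)) :
    ∃ c' : ι → ℝ, 0 ≤ c' ∧ Fintype.linearCombination ℝ v c' = Fintype.linearCombination ℝ v c ∧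
      support c' ⊂ support c := by
  obtain ⟨g, hgc, hg0, hg⟩ := linearDepOn_iff'.mp hv
  rw [Finsupp.mem_supported] at hgc
  replace hg0 : Fintype.linearCombination ℝ v g = 0 := by
    simpa [← Finsupp.linearCombination_eq_fintype_linearCombination_apply] using hg0
  obtain ⟨g, hgc, hg0, j, hj⟩ : ∃ g : ι → ℝ, support g ⊆ support c ∧
      Fintype.linearCombination ℝ v g = 0 ∧ ∃ j, 0 < g j := by
    obtain ⟨j, hj⟩ := Finsupp.ne_iff.mp hg
    rcases hj.lt_or_gt with hj | hj
    · exact ⟨-g, by simpa using hgc, by simpa using hg0, j, by simpa using hj⟩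
    · exact ⟨g, by simpa using hgc, hg0, j, hj⟩
  obtain ⟨t, hct, i, hi, hci⟩ := exists_nonneg_sub_smul_eq_zero hc ⟨j, hj⟩
  refine ⟨c - t • g, hct, by simp [hg0], ?_⟩
  refine (Set.ssubset_iff_of_subset fun k hk => ?_).mpr ⟨i, hgc hi.ne', notMem_support.mpr hci⟩
  by_contra hck
  have hgk : g k = 0 := notMem_support.mp fun h => hck (hgc h)
  simp_all

theorem exists_linearIndepOn_support (v : ι → E) {c : ι → ℝ} (hc : 0 ≤ c) :
    ∃ c' : ι → ℝ, 0 ≤ c' ∧ Fintype.linearCombination ℝ v c' = Fintype.linearCombination ℝ v c ∧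
      LinearIndepOn ℝ v (support c') := by
  induction hs : support c using WellFoundedLT.induction generalizing c with
  | _ s ih =>
    by_cases hv : LinearIndepOn ℝ v (support c)
    · exact ⟨c, hc, rfl, hv⟩
    · obtain ⟨c₁, hc₁, hc₁c, hlt⟩ := exists_support_ssubset_of_not_linearIndepOn hc hv
      obtain ⟨c', hc', hc'c₁, hv'⟩ := ih _ (hs ▸ hlt) hc₁ rfl
      exact ⟨c', hc', hc'c₁.trans hc₁c, hv'⟩

open Classical in
lemma Fintype.linearCombination_subtype_eq {s : Set ι} (v : ι → E) {c : ι → ℝ}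
    (hc : support c ⊆ s) :
    Fintype.linearCombination ℝ (fun i : s => v i) (fun i => c i) =
      Fintype.linearCombination ℝ v c := by
  simp only [Fintype.linearCombination_apply]
  rw [← Fintype.sum_subtype_add_sum_subtype (· ∈ s),
    Fintype.sum_eq_zero (fun i : {i // i ∉ s} => c i • v i), add_zero]
  intro i
  rw [notMem_support.mp fun h => i.2 (hc h), zero_smul]

variable [TopologicalSpace E] [IsTopologicalAddGroup E] [ContinuousSMul ℝ E] [T2Space E]

theorem isClosed_image_linearCombination_nonneg (v : ι → E) :
    IsClosed (Fintype.linearCombination ℝ v '' Set.Ici 0) := by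
  classical
  have hunion : Fintype.linearCombination ℝ v '' Set.Ici 0 = ⋃ (s : Set ι)
      (_ : LinearIndepOn ℝ v s), Fintype.linearCombination ℝ (fun i : s => v i) '' Set.Ici 0 := by
    ext x
    simp only [Set.mem_image, Set.mem_Ici, Set.mem_iUnion]
    constructor
    · rintro ⟨c, hc, rfl⟩
      obtain ⟨c', hc', hc'c, hv⟩ := exists_linearIndepOn_support v hc
      exact ⟨_, hv, fun i => c' i, fun i => hc' i,
        (Fintype.linearCombination_subtype_eq v subset_rfl).trans hc'c⟩
    · rintro ⟨s, -, d, hd, rfl⟩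
      let c : ι → ℝ := fun i => if h : i ∈ s then d ⟨i, h⟩ else 0
      have hcs : support c ⊆ s := fun i hi => by_contra fun h => hi (dif_neg h)
      refine ⟨c, fun i => ?_, ?_⟩
      · by_cases h : i ∈ s
        · simpa [c, h] using hd ⟨i, h⟩
        · simp [c, h]
      · rw [← Fintype.linearCombination_subtype_eq v hcs]
        exact congrArg _ (funext fun i => dif_pos i.2)
  rw [hunion]
  refine isClosed_iUnion_of_finite fun s => isClosed_iUnion_of_finite fun hv => ?_
  refine (LinearMap.isClosedEmbedding_of_injective ?_).isClosedMap _ isClosed_Ici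
  exact LinearMap.ker_eq_bot.mpr (linearIndependent_iff_injective_fintypeLinearCombination.mp hv)

variable [LocallyConvexSpace ℝ E]

theorem exists_nonneg_linearCombination_eq_or_exists_separating (v : ι → E) (u : E) :
    (∃ c : ι → ℝ, 0 ≤ c ∧ Fintype.linearCombination ℝ v c = u) ∨
      ∃ f : StrongDual ℝ E, (∀ i, 0 ≤ f (v i)) ∧ f u < 0 := by
  classical
  let C : ProperCone ℝ E :=
    ⟨(PointedCone.positive ℝ (ι → ℝ)).map (Fintype.linearCombination ℝ v), by
      simpa [PointedCone.coe_map] using isClosed_image_linearCombination_nonneg v⟩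
  have hC : ∀ x, x ∈ C ↔ ∃ c : ι → ℝ, 0 ≤ c ∧ Fintype.linearCombination ℝ v c = x := fun x =>
    PointedCone.mem_map
  by_cases hu : u ∈ C
  · exact .inl ((hC u).mp hu)
  · obtain ⟨f, hfC, hfu⟩ := C.hyperplane_separation_point hu
    refine .inr ⟨f, fun i => hfC _ ((hC _).mpr ⟨Pi.single i 1, ?_, ?_⟩), hfu⟩
    · exact Pi.single_nonneg.mpr zero_le_one
    · simp [Fintype.linearCombination_apply]

end FinitelyGeneratedCone

section AffineFarkas

variable {m n : Type*}

lemma LinearMap.apply_prod_eq_dotProduct_add {R : Type*} [CommSemiring R] [Fintype n]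
    [DecidableEq n] (f : ((n → R) × R) →ₗ[R] R) (x : n → R) (t : R) :
    f (x, t) = x ⬝ᵥ (fun j => f (Pi.single j 1, 0)) + t * f (0, 1) := by
  have hxt : (x, t) = ∑ j, x j • ((Pi.single j 1 : n → R), (0 : R)) + t • (0, 1) := by
    ext j <;> simp [Prod.fst_sum, Prod.snd_sum, Finset.sum_apply, Pi.single_apply]
  rw [hxt, map_add, map_sum, map_smul]
  simp only [map_smul, smul_eq_mul, dotProduct]

def homogenizedRows (M : Matrix m n ℝ) (q : m → ℝ) : Option m → (n → ℝ) × ℝ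
  | none => (0, 1)
  | some i => (M i, q i)

variable {M : Matrix m n ℝ} {q : m → ℝ} {a : n → ℝ} {b : ℝ}

lemma dotProduct_le_of_dual_feasible [Fintype m] [Fintype n] {lam : m → ℝ} (hlam : 0 ≤ lam)
    (hMl : Mᵀ *ᵥ lam = a) (hlq : lam ⬝ᵥ q ≤ b) {x : n → ℝ} (hx : M *ᵥ x ≤ q) : a ⬝ᵥ x ≤ b :=
  calc a ⬝ᵥ x = lam ⬝ᵥ (M *ᵥ x) := by rw [← hMl, mulVec_transpose, dotProduct_mulVec]
    _ ≤ lam ⬝ᵥ q := dotProduct_le_dotProduct_of_nonneg_left hx hlam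
    _ ≤ b := hlq

lemma exists_dual_feasible_of_linearCombination_eq [Fintype m] {c : Option m → ℝ} (hc : 0 ≤ c)
    (h : Fintype.linearCombination ℝ (homogenizedRows M q) c = (a, b)) :
    ∃ lam : m → ℝ, 0 ≤ lam ∧ Mᵀ *ᵥ lam = a ∧ lam ⬝ᵥ q ≤ b := by
  simp only [Fintype.linearCombination_apply, Fintype.sum_option, homogenizedRows,
    Prod.ext_iff, Prod.fst_add, Prod.snd_add, Prod.fst_sum, Prod.snd_sum, Prod.smul_fst,
    Prod.smul_snd, smul_zero, zero_add, smul_eq_mul, mul_one] at h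
  refine ⟨fun i => c (some i), fun i => hc _, ?_, ?_⟩
  · rw [mulVec_transpose, vecMul_eq_sum, ← h.1]
  · rw [dotProduct]
    linarith [h.2, show 0 ≤ c none from hc none]

lemma dotProduct_nonpos_of_mulVec_nonpos [Fintype n] (hall : ∀ x, M *ᵥ x ≤ q → a ⬝ᵥ x ≤ b)
    {x₀ : n → ℝ} (hx₀ : M *ᵥ x₀ ≤ q) {y : n → ℝ} (hy : M *ᵥ y ≤ 0) : a ⬝ᵥ y ≤ 0 := by
  by_contra! hay
  set t := (b - a ⬝ᵥ x₀ + 1) / a ⬝ᵥ y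
  have ht : 0 ≤ t := div_nonneg (by linarith [hall x₀ hx₀]) hay.le
  have hxt : M *ᵥ (x₀ + t • y) ≤ q := by
    rw [mulVec_add, mulVec_smul]
    exact add_le_of_le_of_nonpos hx₀ (smul_nonpos_of_nonneg_of_nonpos ht hy)
  have := hall _ hxt
  rw [dotProduct_add, dotProduct_smul, smul_eq_mul, div_mul_cancel₀ _ hay.ne'] at this
  linarith

lemma dotProduct_le_mul_of_mulVec_le_smul [Fintype n] (hall : ∀ x, M *ᵥ x ≤ q → a ⬝ᵥ x ≤ b)
    {y : n → ℝ} {s : ℝ} (hs : 0 < s) (hy : M *ᵥ y ≤ s • q) : a ⬝ᵥ y ≤ s * b := by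
  have := hall (s⁻¹ • y) (by rwa [mulVec_smul, inv_smul_le_iff_of_pos hs])
  rwa [dotProduct_smul, smul_eq_mul, inv_mul_le_iff₀ hs] at this

lemma dotProduct_le_mul_of_homogenized [Fintype n] (hne : ∃ x, M *ᵥ x ≤ q)
    (hall : ∀ x, M *ᵥ x ≤ q → a ⬝ᵥ x ≤ b) {y : n → ℝ} {s : ℝ} (hs : 0 ≤ s)
    (hy : M *ᵥ y ≤ s • q) : a ⬝ᵥ y ≤ s * b := by
  rcases hs.eq_or_lt with rfl | hs
  · obtain ⟨x₀, hx₀⟩ := hne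
    simpa using dotProduct_nonpos_of_mulVec_nonpos hall hx₀ (by simpa using hy)
  · exact dotProduct_le_mul_of_mulVec_le_smul hall hs hy

lemma nonneg_of_forall_homogenizedRows_nonneg [Fintype n] [DecidableEq n]
    (hne : ∃ x, M *ᵥ x ≤ q) (hall : ∀ x, M *ᵥ x ≤ q → a ⬝ᵥ x ≤ b) (f : ((n → ℝ) × ℝ) →ₗ[ℝ] ℝ)
    (hf : ∀ i, 0 ≤ f (homogenizedRows M q i)) : 0 ≤ f (a, b) := by
  set y : n → ℝ := fun j => f (Pi.single j 1, 0)
  have hs : 0 ≤ f (0, 1) := hf none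
  have hy : M *ᵥ (-y) ≤ f (0, 1) • q := fun i => by
    have := hf (some i)
    rw [homogenizedRows, f.apply_prod_eq_dotProduct_add] at this
    rw [mulVec_neg, Pi.neg_apply, Pi.smul_apply, smul_eq_mul]
    change -(M i ⬝ᵥ y) ≤ _
    linarith
  have := dotProduct_le_mul_of_homogenized hne hall hs hy
  rw [dotProduct_neg] at this
  rw [f.apply_prod_eq_dotProduct_add]
  linarith

end AffineFarkas

/-- Strong duality / affine Farkas lemma: if the polyhedron `{x : M x ≤ q}` is nonempty,
then `a ⬝ x ≤ b` holds on all of it iff there is an entrywise nonnegative multiplier `lam`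
with `Mᵀ lam = a` and `lam ⬝ q ≤ b`. -/
theorem affine_farkas {n m : ℕ} (a : Fin n → ℝ) (b : ℝ)
    (M : Matrix (Fin m) (Fin n) ℝ) (q : Fin m → ℝ)
    (hne : ∃ x : Fin n → ℝ, M *ᵥ x ≤ q) :
    (∀ x : Fin n → ℝ, M *ᵥ x ≤ q → a ⬝ᵥ x ≤ b) ↔
      ∃ lam : Fin m → ℝ, 0 ≤ lam ∧ Mᵀ *ᵥ lam = a ∧ lam ⬝ᵥ q ≤ b := by
  refine ⟨fun hall => ?_, fun ⟨lam, hlam, hMl, hlq⟩ _ =>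
    dotProduct_le_of_dual_feasible hlam hMl hlq⟩
  rcases exists_nonneg_linearCombination_eq_or_exists_separating (homogenizedRows M q) (a, b)
    with ⟨c, hc, hcab⟩ | ⟨f, hf, hfab⟩
  · exact exists_dual_feasible_of_linearCombination_eq hc hcab
  · exact absurd hfab (nonneg_of_forall_homogenizedRows_nonneg hne hall f.toLinearMap hf).not_gt
end

section
/- (Equivalence of invariance conditions) Let S = convexHull{x¹,…,x^{v_s}} ⊆ ℝⁿ for finitely many points xⁱ ∈ ℝⁿ, let U ⊆ ℝ^m be a convex set, let P = convexHull{p¹,…,p^{v_p}} ⊆ ℝ^s for finitely many points pʲ ∈ ℝ^s, let W ⊆ ℝⁿ be any set, and let ℳ ⊆ ℝ^{n×(n+m)s} be any set of matrices. Then the following are equivalent: (i) for every x ∈ S there exists u ∈ U such that for every p ∈ P, every M ∈ ℳ and every w ∈ W, M·[p⊗x; p⊗u] + w ∈ S; (ii) there exist vertex inputs u¹,…,u^{v_s} ∈ U such that for every i ∈ {1,…,v_s}, every j ∈ {1,…,v_p}, every M ∈ ℳ and every w ∈ W, M·[pʲ⊗xⁱ; pʲ⊗uⁱ] + w ∈ S.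 -/
/-!
The vector `M·[p⊗x; p⊗u] + w` depends bilinearly on `p` and on the pair `(x, u)`, so for
fixed `(x, u)` the set of `p` meeting the condition is convex, and for fixed `p` so is the set
of pairs `(x, u)`. The first fact carries the vertex condition from the `pʲ` to all of `P`.
By the second, the pairs `(x, u)` with `u ∈ U` that meet the condition for every `p ∈ P` form
a convex set containing each `(xⁱ, uⁱ)`, hence their convex hull, which projects onto `S`.
-/

open Matrix

/-- Kronecker product of two (column) vectors: the entry of `vkron p x` at index `(j, i)`
is `p j * x i`. -/
def vkron {s a : ℕ} (p : Fin s → ℝ) (x : Fin a → ℝ) : Fin s × Fin a → ℝ :=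
  fun ji => p ji.1 * x ji.2

open Set

section Convexity

variable {E F G : Type*} [AddCommGroup E] [Module ℝ E] [AddCommGroup F] [Module ℝ F]
  [AddCommGroup G] [Module ℝ G] {S : Set G}

theorem convex_setOf_forall_linearMap_add_mem {ι : Type*} (hS : Convex ℝ S)
    (L : ι → F →ₗ[ℝ] G) (I : Set ι) (W : Set G) :
    Convex ℝ {y | ∀ i ∈ I, ∀ w ∈ W, L i y + w ∈ S} := by
  have hT : {y | ∀ i ∈ I, ∀ w ∈ W, L i y + w ∈ S} =
      ⋂ i ∈ I, ⋂ w ∈ W, L i ⁻¹' ((· + w) ⁻¹' S) := by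
    ext; simp
  rw [hT]
  exact convex_iInter₂ fun i _ => convex_iInter₂ fun w _ =>
    (hS.translate_preimage_left w).linear_preimage (L i)

theorem forall_mem_convexHull_of_forall_vertex {ι ν : Type*} (hS : Convex ℝ S)
    (B : ι → E →ₗ[ℝ] F →ₗ[ℝ] G) (I : Set ι) (W : Set G) (p : ν → E) (y : F)
    (hvert : ∀ j, ∀ b ∈ I, ∀ w ∈ W, B b (p j) y + w ∈ S) :
    ∀ p₀ ∈ convexHull ℝ (range p), ∀ b ∈ I, ∀ w ∈ W, B b p₀ y + w ∈ S := by
  intro p₀ hp₀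
  have hconv := convex_setOf_forall_linearMap_add_mem hS (fun b => (B b).flip y) I W
  simp only [LinearMap.flip_apply] at hconv
  refine convexHull_min ?_ hconv hp₀
  exact range_subset_iff.2 hvert

theorem exists_mem_forall_mem_convexHull_of_vertices {ι κ ν X V : Type*}
    [AddCommGroup X] [Module ℝ X] [AddCommGroup V] [Module ℝ V] (hS : Convex ℝ S)
    {U : Set V} (hU : Convex ℝ U) (B : ι → E →ₗ[ℝ] X × V →ₗ[ℝ] G) (I : Set ι) (W : Set G)
    (x : κ → X) (u : κ → V) (hu : ∀ i, u i ∈ U) (p : ν → E)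
    (hvert : ∀ i j, ∀ b ∈ I, ∀ w ∈ W, B b (p j) (x i, u i) + w ∈ S) :
    ∀ x₀ ∈ convexHull ℝ (range x), ∃ u₀ ∈ U,
      ∀ p₀ ∈ convexHull ℝ (range p), ∀ b ∈ I, ∀ w ∈ W, B b p₀ (x₀, u₀) + w ∈ S := by
  intro x₀ hx₀
  set T : Set (X × V) := LinearMap.snd ℝ X V ⁻¹' U ∩
    ⋂ p₀ ∈ convexHull ℝ (range p), {y | ∀ b ∈ I, ∀ w ∈ W, B b p₀ y + w ∈ S}
  have hT : Convex ℝ T := (hU.linear_preimage _).inter <| convex_iInter₂ fun p₀ _ =>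
    convex_setOf_forall_linearMap_add_mem hS (fun b => B b p₀) I W
  have hvert_mem : range (fun i => (x i, u i)) ⊆ T := range_subset_iff.2 fun i =>
    ⟨hu i, mem_iInter₂.2 (forall_mem_convexHull_of_forall_vertex hS B I W p _ (hvert i))⟩
  obtain ⟨y₀, hy₀, rfl⟩ :
      x₀ ∈ LinearMap.fst ℝ X V '' convexHull ℝ (range fun i => (x i, u i)) := by
    rwa [LinearMap.image_convexHull, ← range_comp]
  obtain ⟨hu₀, hy₀T⟩ := convexHull_min hvert_mem hT hy₀
  exact ⟨y₀.2, hu₀, mem_iInter₂.1 hy₀T⟩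

end Convexity

def stackedKron {s a b : ℕ} :
    (Fin s → ℝ) →ₗ[ℝ] (Fin a → ℝ) × (Fin b → ℝ) →ₗ[ℝ] ((Fin s × Fin a) ⊕ (Fin s × Fin b) → ℝ) :=
  LinearMap.mk₂ ℝ (fun p y => Sum.elim (vkron p y.1) (vkron p y.2))
    (by intros; ext (_ | _) <;> simp [vkron, add_mul])
    (by intros; ext (_ | _) <;> simp [vkron, mul_assoc])
    (by intros; ext (_ | _) <;> simp [vkron, mul_add])
    (by intros; ext (_ | _) <;> simp [vkron, mul_left_comm])

/-- Equivalence of invariance conditions: the pointwise robust-invariance condition (i)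
over the polytope `S = conv{x¹,…,x^{v_s}}` and all scheduling parameters in
`P = conv{p¹,…,p^{v_p}}` is equivalent to the vertex condition (ii), for any convex
input set `U`, any disturbance set `W` and any set of models `ℳ`. -/
theorem invariance_condition_equiv {n m s vs vp : ℕ}
    (x : Fin vs → (Fin n → ℝ)) (U : Set (Fin m → ℝ)) (hU : Convex ℝ U)
    (p : Fin vp → (Fin s → ℝ)) (W : Set (Fin n → ℝ))
    (ℳ : Set (Matrix (Fin n) ((Fin s × Fin n) ⊕ (Fin s × Fin m)) ℝ))
    (S : Set (Fin n → ℝ)) (hS : S = convexHull ℝ (Set.range x))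
    (P : Set (Fin s → ℝ)) (hP : P = convexHull ℝ (Set.range p)) :
    (∀ x₀ ∈ S, ∃ u ∈ U, ∀ p₀ ∈ P, ∀ M ∈ ℳ, ∀ w ∈ W,
        M *ᵥ Sum.elim (vkron p₀ x₀) (vkron p₀ u) + w ∈ S) ↔
      (∃ u : Fin vs → (Fin m → ℝ), (∀ i, u i ∈ U) ∧
        ∀ (i : Fin vs) (j : Fin vp), ∀ M ∈ ℳ, ∀ w ∈ W,
          M *ᵥ Sum.elim (vkron (p j) (x i)) (vkron (p j) (u i)) + w ∈ S) := by
  subst hS hP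
  constructor
  · intro h
    choose u hu hcond using fun i => h (x i) (subset_convexHull ℝ _ (mem_range_self i))
    exact ⟨u, hu, fun i j => hcond i (p j) (subset_convexHull ℝ _ (mem_range_self j))⟩
  · rintro ⟨u, hu, hvert⟩
    exact exists_mem_forall_mem_convexHull_of_vertices (convex_convexHull ℝ _) hU
      (fun M => stackedKron.compr₂ M.mulVecLin) ℳ W x u hu p hvert
end

section
/- (Vertex control law induces robust invariance) Let S = convexHull{x¹,…,x^{v_s}} ⊆ ℝⁿ, let U ⊆ ℝ^m be convex, let P = convexHull{p¹,…,p^{v_p}} ⊆ ℝ^s, let W ⊆ ℝⁿ, let ℳ ⊆ ℝ^{n×(n+m)s}, and let u¹,…,u^{v_s} ∈ U be such that for all i ∈ {1,…,v_s}, j ∈ {1,…,v_p}, all M ∈ ℳ and all w ∈ W, M·[pʲ⊗xⁱ; pʲ⊗uⁱ] + w ∈ S. Then for every x ∈ S and every λ ∈ ℝ^{v_s} with λ_i ≥ 0, Σ_i λ_i = 1 and x = Σ_i λ_i xⁱ, the input u := Σ_i λ_i uⁱ satisfies u ∈ U and, for every p ∈ P, every M ∈ ℳ and every w ∈ W, M·[p⊗x;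 p⊗u] + w ∈ S. -/
/-!
The successor state `M *ᵥ [p ⊗ x; p ⊗ u] + w` is bilinear in `p` and the pair `(x, u)`, up to the
translation by `w`. For each argument, the parameters for which it lands in the convex set `S`
form a convex set, so membership at the vertices `(pʲ, (xⁱ, uⁱ))` propagates to the convex hulls:
`P` in the first argument, and in the second the hull of the pairs `(xⁱ, uⁱ)`, which contains the
vertex-controlled pair `(Σ λᵢ xⁱ, Σ λᵢ uⁱ)`.
-/

open Matrix

theorem LinearMap.mem_of_mem_convexHull₂ {𝕜 E F G : Type*} [CommSemiring 𝕜] [PartialOrder 𝕜]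
    [AddCommMonoid E] [AddCommMonoid F] [AddCommMonoid G]
    [Module 𝕜 E] [Module 𝕜 F] [Module 𝕜 G] (B : E →ₗ[𝕜] F →ₗ[𝕜] G)
    {s : Set E} {t : Set F} {T : Set G} (hT : Convex 𝕜 T) (h : ∀ e ∈ s, ∀ f ∈ t, B e f ∈ T)
    {e : E} {f : F} (he : e ∈ convexHull 𝕜 s) (hf : f ∈ convexHull 𝕜 t) : B e f ∈ T := by
  have hvert : ∀ e' ∈ s, B e' f ∈ T := fun e' he' =>
    convexHull_min (fun f' hf' => h e' he' f' hf') (hT.linear_preimage (B e')) hf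
  exact convexHull_min hvert (hT.linear_preimage (B.flip f)) he

def vkronStack (s a b : ℕ) :
    (Fin s → ℝ) →ₗ[ℝ] (Fin a → ℝ) × (Fin b → ℝ) →ₗ[ℝ] ((Fin s × Fin a) ⊕ (Fin s × Fin b) → ℝ) :=
  LinearMap.mk₂ ℝ (fun q z => Sum.elim (vkron q z.1) (vkron q z.2))
    (by intros; ext (k | k) <;> simp [vkron, add_mul])
    (by intros; ext (k | k) <;> simp [vkron, mul_assoc])
    (by intros; ext (k | k) <;> simp [vkron, mul_add])
    (by intros; ext (k | k) <;> simp [vkron, mul_left_comm])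

/-- Vertex control law induces robust invariance: if the vertex invariance condition holds
for vertex inputs `u¹,…,u^{v_s} ∈ U`, then for any `x ∈ S` written as a convex combination
`x = Σ λ_i xⁱ`, the input `u = Σ λ_i uⁱ` lies in `U` and keeps the successor state in `S`
for every `p ∈ P`, every model `M ∈ ℳ` and every disturbance `w ∈ W`. -/
theorem vertex_control_invariance {n m s vs vp : ℕ}
    (x : Fin vs → (Fin n → ℝ)) (U : Set (Fin m → ℝ)) (hU : Convex ℝ U)
    (p : Fin vp → (Fin s → ℝ)) (W : Set (Fin n → ℝ))
    (ℳ : Set (Matrix (Fin n) ((Fin s × Fin n) ⊕ (Fin s × Fin m)) ℝ))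
    (S : Set (Fin n → ℝ)) (hS : S = convexHull ℝ (Set.range x))
    (P : Set (Fin s → ℝ)) (hP : P = convexHull ℝ (Set.range p))
    (u : Fin vs → (Fin m → ℝ)) (hu : ∀ i, u i ∈ U)
    (hinv : ∀ (i : Fin vs) (j : Fin vp), ∀ M ∈ ℳ, ∀ w ∈ W,
      M *ᵥ Sum.elim (vkron (p j) (x i)) (vkron (p j) (u i)) + w ∈ S) :
    ∀ x₀ ∈ S, ∀ lam : Fin vs → ℝ, (∀ i, 0 ≤ lam i) → (∑ i, lam i) = 1 →
      x₀ = ∑ i, lam i • x i →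
      (∑ i, lam i • u i) ∈ U ∧
        ∀ p₀ ∈ P, ∀ M ∈ ℳ, ∀ w ∈ W,
          M *ᵥ Sum.elim (vkron p₀ x₀) (vkron p₀ (∑ i, lam i • u i)) + w ∈ S := by
  rintro x₀ - lam hlam hsum rfl
  refine ⟨hU.sum_mem (fun i _ => hlam i) hsum fun i _ => hu i, fun p₀ hp₀ M hM w hw => ?_⟩
  have hT : Convex ℝ ((· + w) ⁻¹' S) :=
    (hS ▸ convex_convexHull ℝ _ : Convex ℝ S).translate_preimage_left w
  have hpair : (∑ i, lam i • x i, ∑ i, lam i • u i) ∈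
      convexHull ℝ (Set.range fun i => (x i, u i)) := by
    rw [prod_mk_sum]
    exact (convex_convexHull ℝ _).sum_mem (fun i _ => hlam i) hsum
      fun i _ => subset_convexHull ℝ _ (Set.mem_range_self i)
  refine ((vkronStack s n m).compr₂ M.mulVecLin).mem_of_mem_convexHull₂ hT ?_ (hP ▸ hp₀) hpair
  rintro _ ⟨j, rfl⟩ _ ⟨i, rfl⟩
  exact hinv i j M hM w hw
end

section
/- (Configuration-constrained vertex representation) Let C ∈ ℝ^{n_c×n} and σ ∈ ℝ^{n_c}, and let S(q) = { x ∈ ℝⁿ : C x ≤ q } for q ∈ ℝ^{n_c}. For an index set I ⊆ {1,…,n_c}, let F_I(q) = { x ∈ S(q) : (C x)_i = q_i for all i ∈ I }. Assume S(σ) is nonempty and bounded, and is entirely simple, i.e., for every index set I with F_I(σ) ≠ ∅ the rows {C_i : i ∈ I} of C are linearly independent. Let 𝒱 = { I ⊆ {1,…,n_c} : |I| = n and F_I(σ) ≠ ∅ }; for each I ∈ 𝒱 the n×n submatrix C_I (rows of C indexed by I) is invertible, and define the linear map V_I : ℝ^{n_c} → ℝⁿ by V_I(q) = C_I^{−1}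 q_I, where q_I ∈ ℝⁿ collects the entries of q indexed by I. Then for every q ∈ ℝ^{n_c} satisfying C·V_I(q) ≤ q for all I ∈ 𝒱, it holds that S(q) = convexHull{ V_I(q) : I ∈ 𝒱 }. -/
/-!
Every continuous linear functional `f` attains its maximum over the compact polytope `S(σ)` at a
vertex `x₀`. The rows of `C` active at `x₀` have trivial common kernel (else `x₀` would be the
midpoint of a feasible segment) and are independent by simplicity, so there are exactly `n` of
them, forming an index set `I ∈ 𝒱`, and `f` is a combination of these rows. Optimality of `x₀`
makes the coefficients nonnegative. Since `C_I (V_I q) = q_I`, this combination bounds `f` on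
`S(q)` by `f (V_I q)`; so no functional separates a point of `S(q)` from the hull of the `V_I q`.
The configuration constraints `C (V_I q) ≤ q` give the reverse inclusion.
-/

open Matrix Set Filter Topology Function

section LocallyConvex

variable {E : Type*} [AddCommGroup E] [Module ℝ E] [TopologicalSpace E] [T2Space E]
  [IsTopologicalAddGroup E] [ContinuousSMul ℝ E] [LocallyConvexSpace ℝ E]

theorem IsCompact.exists_mem_extremePoints_isMaxOn {s : Set E} (hs : IsCompact s)
    (hne : s.Nonempty) (f : StrongDual ℝ E) : ∃ x ∈ s.extremePoints ℝ, IsMaxOn f s x := by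
  have hexp : IsExposed ℝ s {y ∈ s | ∀ z ∈ s, f z ≤ f y} := fun _ => ⟨f, rfl⟩
  obtain ⟨z, hzs, hz⟩ := hs.exists_isMaxOn hne f.continuous.continuousOn
  obtain ⟨x, hx⟩ := (hexp.isCompact hs).extremePoints_nonempty ⟨z, hzs, hz⟩
  exact ⟨x, hexp.isExtreme.extremePoints_subset_extremePoints hx, hx.1.2⟩

theorem mem_convexHull_of_forall_exists_le {t : Set E} (ht : t.Finite) {x : E}
    (h : ∀ f : StrongDual ℝ E, ∃ y ∈ t, f x ≤ f y) : x ∈ convexHull ℝ t := by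
  by_contra hx
  obtain ⟨f, u, hfu, hux⟩ := geometric_hahn_banach_closed_point (convex_convexHull ℝ t)
    (ht.isCompact_convexHull (𝕜 := ℝ)).isClosed hx
  obtain ⟨y, hyt, hxy⟩ := h f
  linarith [hfu y (subset_convexHull ℝ t hyt)]

end LocallyConvex

namespace Matrix

section LinearAlgebra

variable {ι k : Type*} [Fintype ι] [Fintype k]

theorem card_eq_of_linearIndependent_of_injective_mulVec {A : Matrix ι k ℝ}
    (hli : LinearIndependent ℝ A) (hinj : Injective A.mulVec) :
    Fintype.card ι = Fintype.card k := by
  refine le_antisymm ?_ ?_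
  · simpa using hli.fintype_card_le_finrank
  · simpa using LinearMap.finrank_le_finrank_of_injective (f := A.mulVecLin) hinj

theorem bijective_mulVec_of_card_eq {A : Matrix ι k ℝ} (hcard : Fintype.card ι = Fintype.card k)
    (hinj : Injective A.mulVec) : Bijective A.mulVec :=
  ⟨hinj, (LinearMap.injective_iff_surjective_of_finrank_eq_finrank (f := A.mulVecLin)
    (by simp [hcard])).1 hinj⟩

theorem exists_mulVec_eq_single_of_bijective {R : Type*} [CommSemiring R] [DecidableEq ι]
    {A : Matrix ι k R} (hA : Bijective A.mulVec) :
    ∃ d : ι → k → R, (∀ i, A *ᵥ d i = Pi.single i 1) ∧ ∀ x, x = ∑ i, (A *ᵥ x) i • d i := by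
  refine ⟨fun i => surjInv hA.2 (Pi.single i 1), fun i => surjInv_eq hA.2 _, fun x => hA.1 ?_⟩
  rw [mulVec_sum]
  simp only [mulVec_smul, surjInv_eq hA.2]
  exact pi_eq_sum_univ' _

end LinearAlgebra

section Polyhedron

variable {m k : Type*} [Fintype k] (C : Matrix m k ℝ) (b : m → ℝ)

theorem isClosed_setOf_mulVec_le : IsClosed {x : k → ℝ | C *ᵥ x ≤ b} :=
  isClosed_le (continuous_const.matrix_mulVec continuous_id) continuous_const

theorem convex_setOf_mulVec_le : Convex ℝ {x : k → ℝ | C *ᵥ x ≤ b} :=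
  (convex_Iic b).linear_preimage C.mulVecLin

variable [Fintype m]

noncomputable def activeSet (x : k → ℝ) : Finset m := {i | C i ⬝ᵥ x = b i}

def activeRows (x : k → ℝ) : Matrix (C.activeSet b x) k ℝ := fun i => C i

def IsEntirelySimple : Prop :=
  ∀ x, C *ᵥ x ≤ b → LinearIndependent ℝ (C.activeRows b x)

variable {C b}

theorem mem_activeSet {x : k → ℝ} {i : m} : i ∈ C.activeSet b x ↔ C i ⬝ᵥ x = b i := by
  simp [activeSet]

theorem eventually_mulVec_add_smul_le {x d : k → ℝ} (hx : C *ᵥ x ≤ b)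
    (hd : ∀ i ∈ C.activeSet b x, C i ⬝ᵥ d ≤ 0) : ∀ᶠ ε in 𝓝[>] (0 : ℝ), C *ᵥ (x + ε • d) ≤ b := by
  refine eventually_all.2 fun i => ?_
  have hrow (ε : ℝ) : (C *ᵥ (x + ε • d)) i = C i ⬝ᵥ x + ε * C i ⬝ᵥ d := by
    rw [mulVec_add, mulVec_smul]
    rfl
  simp only [hrow]
  by_cases hi : C i ⬝ᵥ x = b i
  · filter_upwards [self_mem_nhdsWithin] with ε hε
    nlinarith [hd i (mem_activeSet.2 hi), mem_Ioi.1 hε]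
  · have hlim : Tendsto (fun ε : ℝ => C i ⬝ᵥ x + ε * C i ⬝ᵥ d) (𝓝[>] 0) (𝓝 (C i ⬝ᵥ x)) :=
      tendsto_nhdsWithin_of_tendsto_nhds
        ((by fun_prop : Continuous fun ε : ℝ => C i ⬝ᵥ x + ε * C i ⬝ᵥ d).tendsto' 0 _ (by simp))
    exact (hlim.eventually (gt_mem_nhds ((hx i).lt_of_ne hi))).mono fun _ h => h.le

theorem injective_mulVec_activeRows_of_mem_extremePoints {x : k → ℝ}
    (hx : x ∈ extremePoints ℝ {x | C *ᵥ x ≤ b}) : Injective (C.activeRows b x).mulVec := by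
  refine (injective_iff_map_eq_zero (C.activeRows b x).mulVecLin).2 fun d hd₀ => ?_
  have hd : ∀ i ∈ C.activeSet b x, C i ⬝ᵥ d = 0 := fun i hi => congr_fun hd₀ ⟨i, hi⟩
  obtain ⟨hxP, hext⟩ := mem_extremePoints.1 hx
  have hfeas (v : k → ℝ) (hv : ∀ i ∈ C.activeSet b x, C i ⬝ᵥ v = 0) :=
    eventually_mulVec_add_smul_le hxP fun i hi => (hv i hi).le
  obtain ⟨ε, ⟨hplus, hminus⟩, hε⟩ := ((hfeas d hd).and (hfeas (-d) (by simpa using hd))).and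
    self_mem_nhdsWithin |>.exists
  rw [smul_neg, ← sub_eq_add_neg] at hminus
  have h := (hext _ hminus _ hplus (mem_openSegment_sub_add x (ε • d))).2
  simpa [hε.ne'] using h

theorem exists_vertex_nonneg_combination_of_isEntirelySimple (hC : C.IsEntirelySimple b)
    (hcpt : IsCompact {x | C *ᵥ x ≤ b}) (hne : {x | C *ᵥ x ≤ b}.Nonempty)
    (f : StrongDual ℝ (k → ℝ)) :
    ∃ x₀, C *ᵥ x₀ ≤ b ∧ (C.activeSet b x₀).card = Fintype.card k ∧
      ∃ l : C.activeSet b x₀ → ℝ, 0 ≤ l ∧ ∀ x, f x = ∑ i, l i * C i ⬝ᵥ x := by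
  classical
  obtain ⟨x₀, hext, hmax⟩ := hcpt.exists_mem_extremePoints_isMaxOn hne f
  have hx₀ : C *ᵥ x₀ ≤ b := hext.1
  have hinj := injective_mulVec_activeRows_of_mem_extremePoints hext
  have hcard := card_eq_of_linearIndependent_of_injective_mulVec (hC x₀ hx₀) hinj
  obtain ⟨d, hAd, hdecomp⟩ :=
    exists_mulVec_eq_single_of_bijective (bijective_mulVec_of_card_eq hcard hinj)
  refine ⟨x₀, hx₀, by simpa using hcard, fun i => f (d i), fun i => ?_, fun x => ?_⟩
  · -- `-d i` leaves facet `i` and stays on the other active facets: a feasible direction.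
    have hfeas : ∀ᶠ ε in 𝓝[>] (0 : ℝ), C *ᵥ (x₀ + ε • -d i) ≤ b :=
      eventually_mulVec_add_smul_le hx₀ fun j hj => by
        have h : 0 ≤ C.activeRows b x₀ *ᵥ d i := by
          rw [hAd i]
          exact Pi.single_nonneg.2 zero_le_one
        rw [dotProduct_neg]
        exact neg_nonpos.2 (h ⟨j, hj⟩)
    obtain ⟨ε, hε, hεpos⟩ := (hfeas.and self_mem_nhdsWithin).exists
    have h : f (x₀ + ε • -d i) ≤ f x₀ := hmax hε
    rw [map_add, map_smul, map_neg, smul_eq_mul] at h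
    change 0 ≤ f (d i)
    nlinarith
  · conv_lhs => rw [hdecomp x]
    simp only [map_sum, map_smul, smul_eq_mul]
    exact Finset.sum_congr rfl fun i _ => mul_comm _ _

end Polyhedron

end Matrix

/-- Configuration-constrained vertex representation (cf. Villanueva et al., Theorem 2):
if `S(σ) = {x : C x ≤ σ}` is a nonempty, bounded, entirely simple polytope, `𝒱` collects
the `n`-element active index sets of its vertices, and the vertex maps `V I` satisfy
`C_I (V I q) = q_I` for `I ∈ 𝒱` (i.e. `V I q = C_I⁻¹ q_I`), then every `q` satisfying
the configuration constraints `C (V I q) ≤ q` for all `I ∈ 𝒱` yields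
`S(q) = conv{ V I q : I ∈ 𝒱 }`. -/
theorem configuration_constrained_vertex_representation {n nc : ℕ}
    (C : Matrix (Fin nc) (Fin n) ℝ) (σ : Fin nc → ℝ)
    (S : (Fin nc → ℝ) → Set (Fin n → ℝ))
    (hSdef : ∀ q, S q = {x | C *ᵥ x ≤ q})
    (F : Finset (Fin nc) → (Fin nc → ℝ) → Set (Fin n → ℝ))
    (hFdef : ∀ I q, F I q = {x ∈ S q | ∀ i ∈ I, (C *ᵥ x) i = q i})
    (hne : (S σ).Nonempty) (hbd : Bornology.IsBounded (S σ))
    (hsimple : ∀ I : Finset (Fin nc), (F I σ).Nonempty →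
      LinearIndependent ℝ (fun i : I => C (i : Fin nc)))
    (𝒱 : Set (Finset (Fin nc)))
    (h𝒱 : 𝒱 = {I : Finset (Fin nc) | I.card = n ∧ (F I σ).Nonempty})
    (V : Finset (Fin nc) → (Fin nc → ℝ) → (Fin n → ℝ))
    (hV : ∀ I ∈ 𝒱, ∀ q : Fin nc → ℝ, ∀ i ∈ I, C i ⬝ᵥ V I q = q i)
    (q : Fin nc → ℝ) (hq : ∀ I ∈ 𝒱, C *ᵥ V I q ≤ q) :
    S q = convexHull ℝ ((fun I => V I q) '' 𝒱) := by
  have hface {I : Finset (Fin nc)} {x : Fin n → ℝ} (hx : C *ᵥ x ≤ σ)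
      (hI : ∀ i ∈ I, C i ⬝ᵥ x = σ i) : (F I σ).Nonempty :=
    ⟨x, by rw [hFdef, hSdef]; exact ⟨hx, hI⟩⟩
  have hC : C.IsEntirelySimple σ := fun x hx =>
    hsimple _ (hface hx fun _ => C.mem_activeSet.1)
  rw [hSdef] at hne hbd ⊢
  have hcpt := Metric.isCompact_of_isClosed_isBounded (C.isClosed_setOf_mulVec_le σ) hbd
  refine (convexHull_min ?_ (C.convex_setOf_mulVec_le q)).antisymm' fun x hx => ?_
  · rintro _ ⟨I, hI, rfl⟩
    exact hq I hI
  refine mem_convexHull_of_forall_exists_le ((toFinite 𝒱).image _) fun f => ?_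
  obtain ⟨x₀, hx₀, hcard, l, hl, hf⟩ := C.exists_vertex_nonneg_combination_of_isEntirelySimple hC hcpt hne f
  have hI : C.activeSet σ x₀ ∈ 𝒱 := by
    rw [h𝒱]
    exact ⟨by simpa using hcard, hface hx₀ fun _ => C.mem_activeSet.1⟩
  refine ⟨_, mem_image_of_mem _ hI, ?_⟩
  rw [hf, hf]
  gcongr with i
  · exact hl i
  · rw [hV _ hI q i i.2]
    exact hx i
end
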